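/- For every real number $a$ and every real $x$, $\sin(a \sin x) = \sum_{k \in \mathbb{Z}, k \text{ odd}} J_k(a) \sin(k x)$, equivalently $\sin(a\sin x) = 2\sum_{k=0}^{\infty} J_{2k+1}(a)\sin((2k+1)x)$, where $J_k$ denotes the Bessel function of the first kind of order $k$. -/

import Mathlib

/-!
Put `t = exp (x i)`. Multiplying the exponential series of `(a/2) t` and `-(a/2) t⁻¹` and
regrouping the double series along the diagonals `p - q = n` gives the Laurent expansion
`exp ((a/2) (t - t⁻¹)) = ∑ₙ Jₙ(a) tⁿ`. As `(a/2) (t - t⁻¹) = i a sin x`, taking imaginary parts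
gives `sin (a sin x) = ∑ₙ Jₙ(a) sin (n x)`. Since `J₋ₙ = (-1)ⁿ Jₙ`, the terms of index `n` and
`-n` coincide for odd `n` and cancel for even `n`.
-/

/-- Bessel function of the first kind of nonnegative integer order. -/
noncomputable def besselJ (k : ℕ) (a : ℝ) : ℝ :=
  ∑' m : ℕ, ((-1 : ℝ) ^ m / (m.factorial * (m + k).factorial)) * (a / 2) ^ (2 * m + k)

/-- Bessel function of the first kind of integer order, with `J_{-k} = (-1)^k J_k`. -/
noncomputable def besselJInt (k : ℤ) (a : ℝ) : ℝ :=
  if 0 ≤ k then besselJ k.toNat a else (-1) ^ (-k).toNat * besselJ (-k).toNat a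

open scoped Nat
open Complex

lemma summable_besselJ_series (k : ℕ) (a : ℝ) :
    Summable fun m : ℕ => ((-1 : ℝ) ^ m / (m ! * (m + k) !)) * (a / 2) ^ (2 * m + k) := by
  refine .of_norm_bounded ((Real.summable_pow_div_factorial ((a / 2) ^ 2)).mul_left (|a / 2| ^ k))
    fun m => ?_
  have hmk : (1 : ℝ) ≤ (m + k) ! := mod_cast (m + k).factorial_pos
  calc ‖((-1 : ℝ) ^ m / (m ! * (m + k) !)) * (a / 2) ^ (2 * m + k)‖
      = |a / 2| ^ (2 * m + k) / (m ! * (m + k) !) := by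
        simp [abs_div, div_mul_eq_mul_div]
    _ ≤ |a / 2| ^ (2 * m + k) / m ! :=
        div_le_div_of_nonneg_left (by positivity) (by positivity)
          (le_mul_of_one_le_right (by positivity) hmk)
    _ = |a / 2| ^ k * (((a / 2) ^ 2) ^ m / m !) := by
        rw [pow_add, pow_mul, sq_abs]; ring

lemma hasSum_besselJ_mul_pow (a : ℝ) {t : ℂ} (ht : t ≠ 0) (k : ℕ) :
    HasSum (fun m : ℕ => (a / 2 * t) ^ (m + k) / (m + k) ! * ((-(a / 2) * t⁻¹) ^ m / m !))
      (besselJ k a * t ^ k) := by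
  refine ((hasSum_ofReal.mpr (summable_besselJ_series k a).hasSum).mul_right (t ^ k)).congr_fun
    fun m => ?_
  have htm : t ^ m * t⁻¹ ^ m = 1 := by rw [← mul_pow, mul_inv_cancel₀ ht, one_pow]
  push_cast
  rw [mul_pow, mul_pow, neg_pow, pow_add t]
  linear_combination (-1) ^ m * ((a : ℂ) / 2) ^ (2 * m + k) * t ^ k / ((m + k) ! * m !) * htm

lemma besselJInt_natCast (k : ℕ) (a : ℝ) : besselJInt k a = besselJ k a := by
  simp [besselJInt]

lemma besselJInt_neg_natCast (k : ℕ) (a : ℝ) : besselJInt (-k) a = (-1) ^ k * besselJ k a := by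
  rcases k.eq_zero_or_pos with rfl | hk
  · simp [besselJInt]
  · simp [besselJInt, hk.ne']

lemma besselJInt_neg (n : ℤ) (a : ℝ) : besselJInt (-n) a = (-1) ^ n.natAbs * besselJInt n a := by
  obtain ⟨k, rfl | rfl⟩ := n.eq_nat_or_neg
  · simp [besselJInt_natCast, besselJInt_neg_natCast]
  · rw [neg_neg, besselJInt_natCast, besselJInt_neg_natCast, Int.natAbs_neg, Int.natAbs_natCast,
      ← mul_assoc, ← pow_add, Even.neg_one_pow ⟨k, rfl⟩, one_mul]

def diagonalEquiv : (Σ _ : ℤ, ℕ) ≃ ℕ × ℕ where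
  toFun s := (s.2 + s.1.toNat, s.2 + (-s.1).toNat)
  invFun p := ⟨p.1 - p.2, min p.1 p.2⟩
  left_inv := by
    rintro ⟨n, m⟩
    ext <;> simp; omega
  right_inv := by
    rintro ⟨p, q⟩
    ext <;> simp <;> omega

lemma HasSum.int_of_prod_diagonal {α : Type*} [AddCommMonoid α] [TopologicalSpace α]
    [ContinuousAdd α] [RegularSpace α] {f : ℕ × ℕ → α} {g : ℤ → α} {s : α} (hf : HasSum f s)
    (hg : ∀ n : ℤ, HasSum (fun m : ℕ => f (m + n.toNat, m + (-n).toNat)) (g n)) : HasSum g s :=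
  (diagonalEquiv.hasSum_iff.mpr hf).sigma hg

lemma hasSum_prod_pow_div_factorial (u v : ℂ) :
    HasSum (fun p : ℕ × ℕ => u ^ p.1 / p.1 ! * (v ^ p.2 / p.2 !)) (exp (u + v)) := by
  rw [Complex.exp_add, exp_eq_exp_ℂ]
  have hu := NormedSpace.expSeries_div_hasSum_exp u
  have hv := NormedSpace.expSeries_div_hasSum_exp v
  have huv := summable_mul_of_summable_norm (NormedSpace.norm_expSeries_div_summable u)
    (NormedSpace.norm_expSeries_div_summable v)
  exact (hu.mul hv huv :)

theorem hasSum_besselJInt_mul_zpow (a : ℝ) {t : ℂ} (ht : t ≠ 0) :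
    HasSum (fun n : ℤ => (besselJInt n a : ℂ) * t ^ n) (exp (a / 2 * (t - t⁻¹))) := by
  have hprod := hasSum_prod_pow_div_factorial (a / 2 * t) (-(a / 2) * t⁻¹)
  rw [show a / 2 * t + -(a / 2) * t⁻¹ = a / 2 * (t - t⁻¹) by ring] at hprod
  refine hprod.int_of_prod_diagonal fun n => ?_
  obtain ⟨k, rfl | rfl⟩ := n.eq_nat_or_neg
  · simpa [besselJInt_natCast] using hasSum_besselJ_mul_pow a ht k
  · -- the fibre of `-k` is the fibre of `k` for the parameter `-t⁻¹`
    convert hasSum_besselJ_mul_pow a (neg_ne_zero.mpr (inv_ne_zero ht)) k using 1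
    · ext m
      simp only [neg_neg, Int.toNat_natCast, Int.toNat_neg_natCast, add_zero, inv_neg, inv_inv]
      ring
    · rw [besselJInt_neg_natCast, zpow_neg, zpow_natCast, neg_pow t⁻¹, inv_pow]
      push_cast
      ring

theorem hasSum_besselJInt_mul_exp (a x : ℝ) :
    HasSum (fun n : ℤ => (besselJInt n a : ℂ) * exp ((n * x : ℝ) * I))
      (exp ((a * Real.sin x : ℝ) * I)) := by
  have h := hasSum_besselJInt_mul_zpow a (exp_ne_zero (x * I))
  have hsin : (a / 2 * (exp (x * I) - (exp (x * I))⁻¹) : ℂ) = (a * Real.sin x : ℝ) * I := by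
    rw [← exp_neg, ofReal_mul, ofReal_sin, sin]
    ring_nf
    rw [I_sq]
    ring
  rw [hsin] at h
  convert h using 2 with n
  rw [← exp_int_mul]
  push_cast
  ring_nf

theorem hasSum_besselJInt_mul_sin (a x : ℝ) :
    HasSum (fun n : ℤ => besselJInt n a * Real.sin (n * x)) (Real.sin (a * Real.sin x)) := by
  simpa only [im_ofReal_mul, exp_ofReal_mul_I_im] using hasSum_im (hasSum_besselJInt_mul_exp a x)

lemma besselJInt_neg_mul_sin_neg (n : ℤ) (a x : ℝ) :
    besselJInt (-n) a * Real.sin ((-n : ℤ) * x) =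
      (-1) ^ (n.natAbs + 1) * (besselJInt n a * Real.sin (n * x)) := by
  rw [besselJInt_neg, Int.cast_neg, neg_mul, Real.sin_neg]
  ring

lemma HasSum.ite_odd {α : Type*} [DivisionRing α] [CharZero α] [TopologicalSpace α]
    [IsTopologicalRing α] {g : ℤ → α} {s : α} (hg : HasSum g s)
    (h_odd : ∀ n, Odd n → g (-n) = g n) (h_even : ∀ n, Even n → g (-n) = -g n) :
    HasSum (fun n => if Odd n then g n else 0) s := by
  have h := (hg.add ((Equiv.neg ℤ).hasSum_iff.mpr hg)).div_const 2
  rw [add_self_div_two] at h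
  refine h.congr_fun fun n => ?_
  rcases n.even_or_odd with hn | hn
  · simp [Int.not_odd_iff_even.mpr hn, h_even n hn]
  · simp [hn, h_odd n hn]

lemma HasSum.nat_two_mul_odd {α : Type*} [NonAssocSemiring α] [TopologicalSpace α]
    [ContinuousAdd α] {g : ℤ → α} {s : α} (hg : HasSum (fun n => if Odd n then g n else 0) s)
    (h_odd : ∀ n, Odd n → g (-n) = g n) :
    HasSum (fun k : ℕ => 2 * g ((2 * k + 1 : ℕ) : ℤ)) s := by
  have h := hg.nat_add_neg
  rw [if_neg (Int.not_odd_iff_even.mpr Even.zero), add_zero] at h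
  have hinj : Function.Injective fun k : ℕ => 2 * k + 1 := fun _ _ h => by
    simp only at h; omega
  rw [← hinj.hasSum_iff] at h
  · refine h.congr_fun fun k => ?_
    have hk : Odd ((2 * k + 1 : ℕ) : ℤ) := ⟨k, by push_cast; ring⟩
    rw [Function.comp_apply, if_pos hk, if_pos hk.neg, h_odd _ hk, two_mul]
  · intro n hn
    have hn' : ¬Odd (n : ℤ) := fun ⟨m, hm⟩ => hn ⟨m.toNat, by simp only; omega⟩
    simp [hn']

theorem sin_a_sin_expansion (a x : ℝ) :
    HasSum (fun k : ℤ => if Odd k then besselJInt k a * Real.sin ((k : ℝ) * x) else 0)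
      (Real.sin (a * Real.sin x)) ∧
    HasSum (fun k : ℕ => 2 * besselJ (2 * k + 1) a * Real.sin ((2 * k + 1 : ℝ) * x))
      (Real.sin (a * Real.sin x)) := by
  have h_odd : ∀ n : ℤ, Odd n → besselJInt (-n) a * Real.sin ((-n : ℤ) * x) =
      besselJInt n a * Real.sin (n * x) := fun n hn => by
    rw [besselJInt_neg_mul_sin_neg, (Int.natAbs_odd.mpr hn).add_one.neg_one_pow, one_mul]
  have h_even : ∀ n : ℤ, Even n → besselJInt (-n) a * Real.sin ((-n : ℤ) * x) =
      -(besselJInt n a * Real.sin (n * x)) := fun n hn => by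
    rw [besselJInt_neg_mul_sin_neg, (Int.natAbs_even.mpr hn).add_one.neg_one_pow, neg_one_mul]
  have hodd := (hasSum_besselJInt_mul_sin a x).ite_odd h_odd h_even
  refine ⟨hodd, (hodd.nat_two_mul_odd h_odd).congr_fun fun k => ?_⟩
  rw [besselJInt_natCast]
  push_cast
  ring
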